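/- Let A ∈ ℝ^{m×n}, W = ker(A), and let Â ∈ ℝ^{(m+n)×3n} be the block matrix Â = [[A, −A, 0],[I_n, −(1/2)I_n, I_n]], i.e., Â(x, y, z) = (Ax − Ay, x − (1/2)y + z) for (x,y,z) ∈ ℝ^n × ℝ^n × ℝ^n. Let Ŵ = ker(Â) ⊆ ℝ^{3n}. Then κ_{Ŵ} ≤ 4 κ_W. -/

import Mathlib

open scoped BigOperators

variable {ι : Type*} [Fintype ι] [DecidableEq ι]

/-- The ℓ₁ norm of a vector. -/
noncomputable def norm1 (x : ι → ℝ) : ℝ := ∑ i, |x i|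

/-- The ℓ∞ norm of a vector. -/
noncomputable def normInf (x : ι → ℝ) : ℝ := ⨆ i, |x i|

/-- The ℓ₂ norm of a vector. -/
noncomputable def norm2 (x : ι → ℝ) : ℝ := Real.sqrt (∑ i, (x i) ^ 2)

/-- The componentwise negative part `max (-x) 0`. -/
noncomputable def vneg (x : ι → ℝ) : ι → ℝ := fun i => max (-(x i)) 0

/-- The componentwise positive part `max x 0`. -/
noncomputable def vpos (x : ι → ℝ) : ι → ℝ := fun i => max (x i) 0

/-- `y` is sign-consistent with `x`. -/
def SignConsistent (y x : ι → ℝ) : Prop :=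
  (∀ i, 0 ≤ x i * y i) ∧ ∀ i, x i = 0 → y i = 0

/-- The subspace `ℝ^n_C` of vectors supported on `C`. -/
def coordSubspace (C : Set ι) : Submodule ℝ (ι → ℝ) where
  carrier := {x | ∀ i ∉ C, x i = 0}
  zero_mem' := by intro i _; rfl
  add_mem' := by intro a b ha hb i hi; simp [ha i hi, hb i hi]
  smul_mem' := by intro c a ha i hi; simp [ha i hi]

/-- `C` is a circuit of the subspace `W`: `W ∩ ℝ^n_C` is one-dimensional and no
strict subset of `C` has this property. -/
def IsCircuit (W : Submodule ℝ (ι → ℝ)) (C : Set ι) : Prop :=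
  Module.finrank ℝ ↥(W ⊓ coordSubspace C) = 1 ∧
  ∀ C' : Set ι, C' ⊂ C → Module.finrank ℝ ↥(W ⊓ coordSubspace C') ≠ 1

/-- The circuit imbalance measure `κ_W`. -/
noncomputable def kappa (W : Submodule ℝ (ι → ℝ)) : ℝ :=
  sSup ({1} ∪ {r | ∃ C : Set ι, IsCircuit W C ∧ ∃ g ∈ W, g ≠ 0 ∧ {i | g i ≠ 0} = C ∧
    r = sSup ((fun i => |g i|) '' C) / sInf ((fun i => |g i|) '' C)})

/-- The matroidal closure of `K` with respect to `W`. -/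
def clos (W : Submodule ℝ (ι → ℝ)) (K : Set ι) : Set ι :=
  K ∪ {j | j ∉ K ∧ ∃ C : Set ι, IsCircuit W C ∧ j ∈ C ∧ C ⊆ K ∪ {j}}

/-- `z` is the minimum-norm lift `L_I^W(p)` of `p` to `W`:
`z ∈ W`, `z` agrees with `p` on `I`, and `z` has minimum ℓ₂-norm among such vectors. -/
def IsMinLift (W : Submodule ℝ (ι → ℝ)) (I : Finset ι) (p z : ι → ℝ) : Prop :=
  z ∈ W ∧ (∀ i ∈ I, z i = p i) ∧
  ∀ z' ∈ W, (∀ i ∈ I, z' i = p i) → norm2 z ≤ norm2 z'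

/-- The ℓ₂→ℓ₂ operator norm of the lifting map `L_I^W` on `π_I(W)`. -/
noncomputable def liftOpNorm (W : Submodule ℝ (ι → ℝ)) (I : Finset ι) : ℝ :=
  sSup {r | ∃ p z, IsMinLift W I p z ∧ r = norm2 z / Real.sqrt (∑ i ∈ I, (p i) ^ 2)}

/-- The condition number `χ̄_W = max{‖L_I^W‖ : ∅ ≠ I}`. -/
noncomputable def chiBar (W : Submodule ℝ (ι → ℝ)) : ℝ :=
  sSup {r | ∃ I : Finset ι, I.Nonempty ∧ r = liftOpNorm W I}

/-- The orthogonal complement of `W` in `ℝ^n`. -/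
def orthComp (W : Submodule ℝ (ι → ℝ)) : Submodule ℝ (ι → ℝ) where
  carrier := {y | ∀ x ∈ W, ∑ i, x i * y i = 0}
  zero_mem' := by intro x hx; simp
  add_mem' := by
    intro a b ha hb x hx
    simpa [mul_add, Finset.sum_add_distrib, ha x hx] using hb x hx
  smul_mem' := by
    intro c a ha x hx
    have h := ha x hx
    have : ∑ i, x i * (c • a) i = c * ∑ i, x i * a i := by
      rw [Finset.mul_sum]
      refine Finset.sum_congr rfl fun i _ => ?_
      simp [Pi.smul_apply, smul_eq_mul]; ring
    simpa [this, h]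

/-- `x` is a feasible solution to the primal program of Primal-Dual(W,d,c). -/
def PrimalFeasible (W : Submodule ℝ (ι → ℝ)) (d x : ι → ℝ) : Prop :=
  x - d ∈ W ∧ ∀ i, 0 ≤ x i

/-- `s` is a feasible solution to the dual program of Primal-Dual(W,d,c). -/
def DualFeasible (W : Submodule ℝ (ι → ℝ)) (c s : ι → ℝ) : Prop :=
  s - c ∈ orthComp W ∧ ∀ i, 0 ≤ s i

/-- `(x,s)` is an optimal solution to Primal-Dual(W,d,c): both feasible and `⟨x,s⟩ = 0`. -/
def IsOptimalPair (W : Submodule ℝ (ι → ℝ)) (d c x s : ι → ℝ) : Prop :=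
  PrimalFeasible W d x ∧ DualFeasible W c s ∧ ∑ i, x i * s i = 0

/-- The ℓ₂→ℓ₂ operator norm of a matrix. -/
noncomputable def l2OpNorm {m n : Type*} [Fintype m] [Fintype n] [DecidableEq n]
    (A : Matrix m n ℝ) : ℝ :=
  ‖LinearMap.toContinuousLinearMap (Matrix.toEuclideanLin A)‖

/-- The max-norm (largest absolute value of an entry) of a matrix. -/
noncomputable def matMaxNorm {m n : Type*} [Fintype m] [Fintype n] (A : Matrix m n ℝ) : ℝ :=
  ⨆ i, ⨆ j, |A i j|


/-!
Write `g = (x, y, z) ∈ Ŵ` and `h = x - y`, so that `h ∈ ker A` and `z = -h - y / 2`.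

If some index `j` has `x j`, `y j`, `z j` all nonzero, then `(e_j, e_j, -e_j / 2) ∈ Ŵ` is
supported inside the circuit `supp g`, so `g` is a multiple of it and has imbalance `2`.

Otherwise, at every index one of `x j`, `y j`, `z j` vanishes, which forces `y = σ h` with
`σ j ∈ {0, -1, -2}`, i.e. `g = initLift σ h` for the injective linear map
`initLift σ : h ↦ ((1 + σ) h, σ h, -(1 + σ / 2) h)`. This map sends `ker A` into `Ŵ` without
enlarging supports, so `supp h` is a circuit of `ker A`; and the nonzero coefficients of
`initLift σ` have absolute values in `[1/2, 2]`, so the imbalance of `g` is at most `4` times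
that of `h`.
-/

open Function Matrix
open scoped Pointwise

section Circuits

variable {α : Type*} {W : Submodule ℝ (α → ℝ)} {C : Set α} {g v : α → ℝ}

theorem IsCircuit.exists_eq_smul (hC : IsCircuit W C) (hg : g ∈ W) (hg0 : g ≠ 0)
    (hgC : ∀ i ∉ C, g i = 0) (hv : v ∈ W) (hvC : ∀ i ∉ C, v i = 0) : ∃ c : ℝ, v = c • g := by
  obtain ⟨c, hc⟩ := (finrank_eq_one_iff_of_nonzero' (⟨g, hg, hgC⟩ : ↥(W ⊓ coordSubspace C))
    fun h0 => hg0 (congrArg Subtype.val h0)).mp hC.1 ⟨v, hv, hvC⟩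
  exact ⟨c, congrArg Subtype.val hc.symm⟩

theorem isCircuit_support_of_forall_exists_eq_smul (hg : g ∈ W) (hg0 : g ≠ 0)
    (hspan : ∀ v ∈ W, (∀ i, g i = 0 → v i = 0) → ∃ c : ℝ, v = c • g) :
    IsCircuit W {i | g i ≠ 0} := by
  refine ⟨?_, fun C' hC' hrank => ?_⟩
  · refine (finrank_eq_one_iff_of_nonzero'
      (⟨g, hg, fun i hi => not_not.mp hi⟩ : ↥(W ⊓ coordSubspace {i | g i ≠ 0}))
      fun h0 => hg0 (congrArg Subtype.val h0)).mpr ?_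
    rintro ⟨v, hv, hvC⟩
    obtain ⟨c, rfl⟩ := hspan v hv fun i hi => hvC i (not_not.mpr hi)
    exact ⟨c, rfl⟩
  · have := Module.nontrivial_of_finrank_pos (hrank ▸ one_pos)
    obtain ⟨⟨u, hu, huC'⟩, hu0⟩ := exists_ne (0 : ↥(W ⊓ coordSubspace C'))
    obtain ⟨c, rfl⟩ := hspan u hu fun i hi => huC' i fun hiC' => hC'.1 hiC' hi
    obtain ⟨j, hjC, hjC'⟩ := Set.exists_of_ssubset hC'
    have hc : c = 0 := (by simpa using huC' j hjC' : c = 0 ∨ g j = 0).resolve_right hjC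
    simp [hc] at hu0

end Circuits

noncomputable def imbalance {α : Type*} (g : α → ℝ) : ℝ :=
  sSup ((fun i => |g i|) '' {i | g i ≠ 0}) / sInf ((fun i => |g i|) '' {i | g i ≠ 0})

section Imbalance

variable {α β : Type*}

theorem imbalance_smul (g : α → ℝ) {c : ℝ} (hc : c ≠ 0) : imbalance (c • g) = imbalance g := by
  have hsupp : {i | (c • g) i ≠ 0} = {i | g i ≠ 0} := by ext; simp [hc]
  have himage : (fun i => |(c • g) i|) '' {i | g i ≠ 0}
      = |c| • (fun i => |g i|) '' {i | g i ≠ 0} := by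
    rw [← Set.image_smul, Set.image_image]
    simp [abs_mul]
  rw [imbalance, imbalance, hsupp, himage, Real.sSup_smul_of_nonneg (abs_nonneg c),
    Real.sInf_smul_of_nonneg (abs_nonneg c), smul_eq_mul, smul_eq_mul,
    mul_div_mul_left _ _ (abs_ne_zero.mpr hc)]

theorem imbalance_le_div {g : α → ℝ} (hg0 : g ≠ 0) {a b : ℝ} (hb : 0 < b)
    (hbounds : ∀ i, g i ≠ 0 → b ≤ |g i| ∧ |g i| ≤ a) : imbalance g ≤ a / b := by
  obtain ⟨i, hi⟩ := Function.ne_iff.mp hg0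
  have hne : ((fun i => |g i|) '' {i | g i ≠ 0}).Nonempty := ⟨_, i, hi, rfl⟩
  refine div_le_div₀ (hb.le.trans ((hbounds i hi).1.trans (hbounds i hi).2)) ?_ hb ?_
  · exact csSup_le hne fun _ ⟨k, hk, hkr⟩ => hkr ▸ (hbounds k hk).2
  · exact le_csInf hne fun _ ⟨k, hk, hkr⟩ => hkr ▸ (hbounds k hk).1

theorem imbalance_le_mul_imbalance [Finite α] {g : β → ℝ} {h : α → ℝ} (hg0 : g ≠ 0) {a b : ℝ}
    (ha : 0 < a)
    (hgh : ∀ k, g k ≠ 0 → ∃ j, h j ≠ 0 ∧ a * |h j| ≤ |g k| ∧ |g k| ≤ b * |h j|) :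
    imbalance g ≤ b / a * imbalance h := by
  set S := (fun j => |h j|) '' {j | h j ≠ 0}
  have hfin : S.Finite := (Set.toFinite _).image _
  obtain ⟨k, hk⟩ := Function.ne_iff.mp hg0
  obtain ⟨j, hj, -⟩ := hgh k hk
  obtain ⟨j₀, hj₀, hj₀S⟩ := (show S.Nonempty from ⟨_, j, hj, rfl⟩).csInf_mem hfin
  have hm : 0 < sInf S := hj₀S ▸ abs_pos.mpr hj₀
  calc imbalance g ≤ (b * sSup S) / (a * sInf S) := by
        refine imbalance_le_div hg0 (by positivity) fun k hk => ?_
        obtain ⟨j, hj, hlow, hupp⟩ := hgh k hk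
        have hab : a ≤ b := le_of_mul_le_mul_right (hlow.trans hupp) (abs_pos.mpr hj)
        exact ⟨(mul_le_mul_of_nonneg_left (csInf_le hfin.bddBelow ⟨j, hj, rfl⟩) ha.le).trans hlow,
          hupp.trans (mul_le_mul_of_nonneg_left (le_csSup hfin.bddAbove ⟨j, hj, rfl⟩)
            (ha.le.trans hab))⟩
    _ = b / a * imbalance h := mul_div_mul_comm _ _ _ _

end Imbalance

section Kappa

variable {α : Type*} {W : Submodule ℝ (α → ℝ)} {g : α → ℝ}

theorem bddAbove_kappa_set [Finite α] (W : Submodule ℝ (α → ℝ)) :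
    BddAbove ({1} ∪ {r | ∃ C : Set α, IsCircuit W C ∧ ∃ g ∈ W, g ≠ 0 ∧ {i | g i ≠ 0} = C ∧
      r = sSup ((fun i => |g i|) '' C) / sInf ((fun i => |g i|) '' C)}) := by
  refine ((Set.finite_singleton 1).union <| Set.Finite.subset (s := ⋃ C ∈ {C | IsCircuit W C},
    {r | ∃ g ∈ W, g ≠ 0 ∧ {i | g i ≠ 0} = C ∧ r = imbalance g}) ?_ ?_).bddAbove
  · refine (Set.toFinite _).biUnion fun C hC => Set.Subsingleton.finite ?_
    rintro _ ⟨g, hg, hg0, rfl, rfl⟩ _ ⟨g', hg', hg'0, hsupp, rfl⟩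
    have hsupp' : ∀ i ∉ {i | g i ≠ 0}, g' i = 0 := fun i hi =>
      not_not.mp fun hi' => hi (hsupp ▸ show i ∈ {i | g' i ≠ 0} from hi')
    obtain ⟨c, rfl⟩ := hC.exists_eq_smul hg hg0 (fun i hi => not_not.mp hi) hg' hsupp'
    exact (imbalance_smul g (left_ne_zero_of_smul hg'0)).symm
  · rintro r ⟨C, hC, g, hg, hg0, rfl, rfl⟩
    exact Set.mem_biUnion hC ⟨g, hg, hg0, rfl, rfl⟩

theorem one_le_kappa [Finite α] : 1 ≤ kappa W :=
  le_csSup (bddAbove_kappa_set W) (Or.inl rfl)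

theorem imbalance_le_kappa [Finite α] (hg : g ∈ W) (hg0 : g ≠ 0)
    (hC : IsCircuit W {i | g i ≠ 0}) : imbalance g ≤ kappa W :=
  le_csSup (bddAbove_kappa_set W) (Or.inr ⟨_, hC, g, hg, hg0, rfl, rfl⟩)

theorem kappa_le {K : ℝ} (h1 : 1 ≤ K)
    (h : ∀ g ∈ W, g ≠ 0 → IsCircuit W {i | g i ≠ 0} → imbalance g ≤ K) : kappa W ≤ K := by
  refine csSup_le ⟨1, Or.inl rfl⟩ ?_
  rintro r (rfl | ⟨C, hC, g, hg, hg0, rfl, rfl⟩)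
  exacts [h1, h g hg hg0 hC]

end Kappa

section InitLift

variable {α : Type*}

noncomputable def initLift (σ : α → ℝ) : (α → ℝ) →ₗ[ℝ] (α ⊕ α ⊕ α → ℝ) where
  toFun h := Sum.elim (fun i => (1 + σ i) * h i)
    (Sum.elim (fun i => σ i * h i) fun i => -(1 + σ i / 2) * h i)
  map_add' h h' := by ext (i | i | i) <;> simp <;> ring
  map_smul' c h := by ext (i | i | i) <;> simp <;> ring

theorem initLift_sub (σ h : α → ℝ) :
    (fun i => initLift σ h (Sum.inl i)) - (fun i => initLift σ h (Sum.inr (Sum.inl i))) = h := by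
  ext i; simp [initLift]; ring

theorem initLift_injective (σ : α → ℝ) : Injective (initLift σ) := by
  intro h h' e
  rw [← initLift_sub σ h, ← initLift_sub σ h', e]

theorem initLift_eq_zero_of_eq_zero {σ h h' : α → ℝ} (hh' : ∀ i, h i = 0 → h' i = 0) :
    ∀ k, initLift σ h k = 0 → initLift σ h' k = 0 := by
  rintro (i | i | i) hk <;>
  · simp only [initLift, LinearMap.coe_mk, AddHom.coe_mk, Sum.elim_inl, Sum.elim_inr,
      mul_eq_zero] at hk ⊢
    exact hk.imp_right (hh' i)

theorem imbalance_initLift_le [Finite α] {σ h : α → ℝ}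
    (hσ : ∀ i, σ i = 0 ∨ σ i = -1 ∨ σ i = -2) (hh0 : h ≠ 0) :
    imbalance (initLift σ h) ≤ 4 * imbalance h := by
  have hbound := imbalance_le_mul_imbalance (a := 1 / 2) (b := 2) (h := h)
    ((map_ne_zero_iff _ (initLift_injective σ)).mpr hh0) (by norm_num) ?_
  · convert hbound using 1; norm_num
  rintro (i | i | i) hk <;> refine ⟨i, ?_⟩ <;>
  · simp only [initLift, LinearMap.coe_mk, AddHom.coe_mk, Sum.elim_inl, Sum.elim_inr,
      ne_eq, mul_eq_zero, not_or, abs_mul] at hk ⊢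
    refine ⟨hk.2, mul_le_mul_of_nonneg_right ?_ (abs_nonneg _),
      mul_le_mul_of_nonneg_right ?_ (abs_nonneg _)⟩ <;>
    rcases hσ i with hσi | hσi | hσi <;> revert hk <;> norm_num [hσi]

end InitLift

section InitKernel

variable {κ α : Type*} [Fintype α]

/-- The kernel `Ŵ` of `Â`, with coordinates ordered as `(x, y, z)`. -/
def initKernel (A : Matrix κ α ℝ) : Submodule ℝ (α ⊕ α ⊕ α → ℝ) where
  carrier := {v |
    A.mulVec (fun i => v (Sum.inl i)) - A.mulVec (fun i => v (Sum.inr (Sum.inl i))) = 0 ∧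
    ∀ i, v (Sum.inl i) - (1 / 2) * v (Sum.inr (Sum.inl i)) + v (Sum.inr (Sum.inr i)) = 0}
  zero_mem' := by simp
  add_mem' := by
    rintro v w ⟨hv, hv'⟩ ⟨hw, hw'⟩
    refine ⟨?_, fun i => by simp only [Pi.add_apply]; linear_combination hv' i + hw' i⟩
    have hadd := congrArg₂ (· + ·) hv hw
    rwa [add_zero, ← add_sub_add_comm, ← mulVec_add, ← mulVec_add] at hadd
  smul_mem' := by
    rintro c v ⟨hv, hv'⟩
    refine ⟨?_, fun i => by simp only [Pi.smul_apply, smul_eq_mul]; linear_combination c * hv' i⟩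
    have hsmul := congrArg (c • ·) hv
    simp only [smul_sub, smul_zero, ← mulVec_smul] at hsmul
    exact hsmul

variable {A : Matrix κ α ℝ}

theorem initLift_mem_initKernel (σ : α → ℝ) {h : α → ℝ}
    (hh : h ∈ LinearMap.ker A.mulVecLin) : initLift σ h ∈ initKernel A := by
  refine ⟨?_, fun i => ?_⟩
  · rwa [← mulVec_sub, initLift_sub]
  · simp [initLift]; ring

theorem eq_initLift_of_mem_initKernel {v : α ⊕ α ⊕ α → ℝ}
    (hv : v ∈ initKernel A) {σ : α → ℝ}
    (hσ : ∀ i, v (Sum.inr (Sum.inl i)) = σ i * (v (Sum.inl i) - v (Sum.inr (Sum.inl i)))) :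
    v = initLift σ (fun i => v (Sum.inl i) - v (Sum.inr (Sum.inl i))) := by
  ext (i | i | i) <;>
    simp only [initLift, LinearMap.coe_mk, AddHom.coe_mk, Sum.elim_inl, Sum.elim_inr]
  · linear_combination hσ i
  · exact hσ i
  · linear_combination hv.2 i - hσ i / 2

theorem isCircuit_support_of_isCircuit_initLift {σ h : α → ℝ}
    (hh : h ∈ LinearMap.ker A.mulVecLin) (hh0 : h ≠ 0)
    (hC : IsCircuit (initKernel A) {k | initLift σ h k ≠ 0}) :
    IsCircuit (LinearMap.ker A.mulVecLin) {i | h i ≠ 0} := by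
  refine isCircuit_support_of_forall_exists_eq_smul hh hh0 fun h' hh' hsupp => ?_
  obtain ⟨c, hc⟩ := hC.exists_eq_smul (initLift_mem_initKernel σ hh)
    ((map_ne_zero_iff _ (initLift_injective σ)).mpr hh0) (fun k hk => not_not.mp hk)
    (initLift_mem_initKernel σ hh') fun k hk =>
      initLift_eq_zero_of_eq_zero hsupp k (not_not.mp hk)
  exact ⟨c, initLift_injective σ (by rw [hc, map_smul])⟩

theorem imbalance_le_two_of_isCircuit_initKernel [DecidableEq α] {g : α ⊕ α ⊕ α → ℝ}
    (hg : g ∈ initKernel A) (hC : IsCircuit (initKernel A) {k | g k ≠ 0}) {j : α}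
    (hx : g (Sum.inl j) ≠ 0) (hy : g (Sum.inr (Sum.inl j)) ≠ 0)
    (hz : g (Sum.inr (Sum.inr j)) ≠ 0) : imbalance g ≤ 2 := by
  let v : α ⊕ α ⊕ α → ℝ :=
    Sum.elim (Pi.single j 1) (Sum.elim (Pi.single j 1) (Pi.single j (-1 / 2)))
  have hv : v ∈ initKernel A := by
    refine ⟨by simp [v], fun i => ?_⟩
    by_cases hij : i = j <;> norm_num [v, hij]
  have hvg : ∀ k, g k = 0 → v k = 0 := by
    rintro (i | i | i) hk <;> by_cases hij : i = j <;> simp_all [v]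
  have hv0 : v (Sum.inl j) ≠ 0 := by simp [v]
  have hv_bounds : ∀ k, v k ≠ 0 → 1 / 2 ≤ |v k| ∧ |v k| ≤ 1 := by
    rintro (i | i | i) <;> by_cases hij : i = j <;> norm_num [v, hij]
  obtain ⟨c, hc⟩ := hC.exists_eq_smul hg (fun h0 => hx (congrFun h0 _))
    (fun k hk => not_not.mp hk) hv fun k hk => hvg k (not_not.mp hk)
  have hc0 : c ≠ 0 := by rintro rfl; simp [hc] at hv0
  calc imbalance g = imbalance v := by rw [hc, imbalance_smul g hc0]
    _ ≤ 1 / (1 / 2) := imbalance_le_div (fun h0 => hv0 (congrFun h0 _)) (by norm_num) hv_bounds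
    _ = 2 := by norm_num

theorem imbalance_le_four_mul_kappa_of_isCircuit_initKernel {g : α ⊕ α ⊕ α → ℝ}
    (hg : g ∈ initKernel A) (hg0 : g ≠ 0) (hC : IsCircuit (initKernel A) {k | g k ≠ 0})
    (hdeg : ∀ j, g (Sum.inl j) ≠ 0 → g (Sum.inr (Sum.inl j)) ≠ 0 → g (Sum.inr (Sum.inr j)) = 0) :
    imbalance g ≤ 4 * kappa (LinearMap.ker A.mulVecLin) := by
  set h : α → ℝ := fun i => g (Sum.inl i) - g (Sum.inr (Sum.inl i))
  -- where `h i = 0`, also `y i = 0`, and `σ i = 0` by the convention `y / 0 = 0`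
  set σ : α → ℝ := fun i => g (Sum.inr (Sum.inl i)) / h i
  have hz : ∀ i, g (Sum.inr (Sum.inr i)) = -h i - g (Sum.inr (Sum.inl i)) / 2 := fun i => by
    linear_combination hg.2 i
  have hy : ∀ i, g (Sum.inr (Sum.inl i)) = σ i * h i := by
    intro i
    by_cases hi : h i = 0
    · rw [hi, mul_zero]
      by_contra hy0
      have hx0 : g (Sum.inl i) ≠ 0 := by simpa [h, sub_eq_zero.mp hi] using hy0
      have := hz i
      rw [hdeg i hx0 hy0, hi] at this
      exact hy0 (by linarith)
    · exact (div_mul_cancel₀ _ hi).symm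
  have hσ : ∀ i, σ i = 0 ∨ σ i = -1 ∨ σ i = -2 := by
    intro i
    by_cases hi : h i = 0
    · simp [σ, hi]
    by_cases hy0 : g (Sum.inr (Sum.inl i)) = 0
    · simp [σ, hy0]
    by_cases hx0 : g (Sum.inl i) = 0
    · right; left
      rw [div_eq_iff hi]; simp [h, hx0]
    · right; right
      have := hz i
      rw [hdeg i hx0 hy0] at this
      rw [div_eq_iff hi]; linarith
  have hgh : g = initLift σ h := eq_initLift_of_mem_initKernel hg hy
  have hh0 : h ≠ 0 := by rintro hh; exact hg0 (by rw [hgh, hh, map_zero])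
  have hhW : h ∈ LinearMap.ker A.mulVecLin :=
    (mulVec_sub A (fun i => g (Sum.inl i)) fun i => g (Sum.inr (Sum.inl i))).trans hg.1
  rw [hgh] at hC ⊢
  calc imbalance (initLift σ h) ≤ 4 * imbalance h := imbalance_initLift_le hσ hh0
    _ ≤ 4 * kappa (LinearMap.ker A.mulVecLin) := by
      gcongr
      exact imbalance_le_kappa hhW hh0 (isCircuit_support_of_isCircuit_initLift hhW hh0 hC)

end InitKernel

/-- the circuit imbalance of the kernel `Ŵ` of the initialization
block matrix `Â = [[A, −A, 0],[I, −½I, I]]` is at most `4 κ_{ker A}`. -/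
theorem kappa_init_system {m n : ℕ} (A : Matrix (Fin m) (Fin n) ℝ)
    (What : Submodule ℝ ((Fin n ⊕ Fin n ⊕ Fin n) → ℝ))
    (hWhat : ∀ v : (Fin n ⊕ Fin n ⊕ Fin n) → ℝ, v ∈ What ↔
      (A.mulVec (fun i => v (Sum.inl i)) - A.mulVec (fun i => v (Sum.inr (Sum.inl i))) = 0 ∧
       ∀ i, v (Sum.inl i) - (1 / 2) * v (Sum.inr (Sum.inl i)) + v (Sum.inr (Sum.inr i)) = 0)) :
    kappa What ≤ 4 * kappa (LinearMap.ker A.mulVecLin) := by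
  obtain rfl : What = initKernel A := Submodule.ext hWhat
  have hκ : 1 ≤ kappa (LinearMap.ker A.mulVecLin) := one_le_kappa
  refine kappa_le (by linarith) fun g hg hg0 hC => ?_
  by_cases hfull : ∃ j, g (Sum.inl j) ≠ 0 ∧ g (Sum.inr (Sum.inl j)) ≠ 0 ∧
      g (Sum.inr (Sum.inr j)) ≠ 0
  · obtain ⟨j, hx, hy, hz⟩ := hfull
    linarith [imbalance_le_two_of_isCircuit_initKernel hg hC hx hy hz]
  · push Not at hfull
    exact imbalance_le_four_mul_kappa_of_isCircuit_initKernel hg hg0 hC hfull
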